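/- For an integer m ≥ 2, let S_m = { i ∈ ℤ : ⌊i/m⌋ is odd }, and let K_m be the simple graph with vertex set ℤ × ℤ whose edges are: (1) (i, j) ∼ (i₁, j₁) whenever |i − i₁| = 1 and j = j₁, or i = i₁ and |j − j₁| = 1; and (2) (i, j) ∼ (i + 1, j + 1) whenever i ∈ S_m and j is even, and (t, j) ∼ (t + 1, j − 1) whenever t ∈ ℤ \ S_m and j is even. Then for all integers x, y ≥ 2 with x ≠ y, the graphs K_x and K_y are not isomorphic; in particular, the family {K_m : m ≥ 2} contains infinitely many pairwise non-isomorphic graphs. -/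
import Mathlib


/-- `i ∈ S_m` iff `⌊i/m⌋` is odd. -/
def Smem (m i : ℤ) : Prop := Odd (Int.fdiv i m)

/-- The defining relation for the graph `K_m`. -/
def Krel (m : ℤ) (p q : ℤ × ℤ) : Prop :=
  (|p.1 - q.1| = 1 ∧ p.2 = q.2) ∨
  (p.1 = q.1 ∧ |p.2 - q.2| = 1) ∨
  (Smem m p.1 ∧ Even p.2 ∧ q = (p.1 + 1, p.2 + 1)) ∨
  (¬ Smem m p.1 ∧ Even p.2 ∧ q = (p.1 + 1, p.2 - 1))

/-- The graph `K_m` on vertex set `ℤ × ℤ` (the symmetric irreflexive closure of `Krel m`). -/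
def Kgraph (m : ℤ) : SimpleGraph (ℤ × ℤ) := SimpleGraph.fromRel (Krel m)


lemma fdiv_step {m : ℤ} (hm : 2 ≤ m) (i : ℤ) :
    (Int.fdiv i m = Int.fdiv (i-1) m + 1 ∧ m ∣ i) ∨
    (Int.fdiv i m = Int.fdiv (i-1) m ∧ ¬ m ∣ i) := by
  have hm0 : (0:ℤ) ≤ m := by omega
  rw [Int.fdiv_eq_ediv_of_nonneg _ hm0, Int.fdiv_eq_ediv_of_nonneg _ hm0]
  have h1 := Int.mul_ediv_add_emod (i-1) m
  have h2 : 0 ≤ (i-1) % m := Int.emod_nonneg _ (by omega)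
  have h3 : (i-1) % m < m := Int.emod_lt_of_pos _ (by omega)
  set q := (i-1)/m with hq
  set r := (i-1)%m with hr
  by_cases hc : r + 1 = m
  · left
    have hi : i = m * (q + 1) := by linarith [h1]
    constructor
    · rw [hi, Int.mul_ediv_cancel_left _ (by omega : m ≠ 0)]
    · exact ⟨q+1, hi⟩
  · right
    have hi : i = r + 1 + m * q := by linarith
    have hd : i / m = (r+1)/m + q := by
      rw [hi]; exact Int.add_mul_ediv_left _ _ (by omega)
    have h0 : (r+1)/m = 0 := Int.ediv_eq_zero_of_lt (by omega) (by omega)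
    constructor
    · omega
    · intro hdvd
      have : i % m = 0 := Int.emod_eq_zero_of_dvd hdvd
      have : i % m = r + 1 := by
        rw [hi, Int.add_mul_emod_self_left, Int.emod_eq_of_lt (by omega) (by omega)]
      omega

lemma smem_not_dvd {m i : ℤ} (hm : 2 ≤ m) (h : ¬ m ∣ i) : (Smem m (i-1) ↔ Smem m i) := by
  rcases fdiv_step hm i with ⟨h1, h2⟩ | ⟨h1, h2⟩
  · exact absurd h2 h
  · unfold Smem; rw [h1]

lemma smem_dvd {m i : ℤ} (hm : 2 ≤ m) (h : m ∣ i) : (Smem m (i-1) ↔ ¬ Smem m i) := by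
  rcases fdiv_step hm i with ⟨h1, h2⟩ | ⟨h1, h2⟩
  · unfold Smem
    rw [h1, Int.odd_iff, Int.odd_iff]
    omega
  · exact absurd h h2

lemma adj_iff {m : ℤ} {p q : ℤ × ℤ} :
    (Kgraph m).Adj p q ↔ p ≠ q ∧ (Krel m p q ∨ Krel m q p) :=
  SimpleGraph.fromRel_adj _ _ _

lemma ne_mk {a b c d : ℤ} (h : a ≠ c ∨ b ≠ d) : ((a,b) : ℤ × ℤ) ≠ (c,d) := by
  simp [Prod.ext_iff]; tauto

-- constructors
lemma adjR (m i j : ℤ) : (Kgraph m).Adj (i,j) (i+1,j) := by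
  refine adj_iff.mpr ⟨ne_mk (Or.inl (by omega)), Or.inl (Or.inl ⟨?_, rfl⟩)⟩
  simp

lemma adjU (m i j : ℤ) : (Kgraph m).Adj (i,j) (i,j+1) := by
  refine adj_iff.mpr ⟨ne_mk (Or.inr (by omega)), Or.inl (Or.inr (Or.inl ⟨rfl, ?_⟩))⟩
  simp

lemma adjDU {m i j : ℤ} (h : Smem m i) (he : Even j) :
    (Kgraph m).Adj (i,j) (i+1,j+1) := by
  exact adj_iff.mpr ⟨ne_mk (Or.inl (by omega)),
    Or.inl (Or.inr (Or.inr (Or.inl ⟨h, he, rfl⟩)))⟩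

lemma adjDD {m i j : ℤ} (h : ¬ Smem m i) (he : Even j) :
    (Kgraph m).Adj (i,j) (i+1,j-1) := by
  exact adj_iff.mpr ⟨ne_mk (Or.inl (by omega)),
    Or.inl (Or.inr (Or.inr (Or.inr ⟨h, he, rfl⟩)))⟩

-- derived forms with arbitrary targets
lemma adjH' {m i j a : ℤ} (h : a = i + 1 ∨ a = i - 1) : (Kgraph m).Adj (i,j) (a,j) := by
  rcases h with rfl | rfl
  · exact adjR m i j
  · have := (adjR m (i-1) j).symm
    convert this using 2
    omega

lemma adjV' {m i j b : ℤ} (h : b = j + 1 ∨ b = j - 1) : (Kgraph m).Adj (i,j) (i,b) := by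
  rcases h with rfl | rfl
  · exact adjU m i j
  · have := (adjU m i (j-1)).symm
    convert this using 2
    omega

-- destructor
lemma adj_cases {m i j : ℤ} {q : ℤ × ℤ} (h : (Kgraph m).Adj (i,j) q) :
    q = (i+1,j) ∨ q = (i-1,j) ∨ q = (i,j+1) ∨ q = (i,j-1) ∨
    (Smem m i ∧ Even j ∧ q = (i+1,j+1)) ∨
    (¬ Smem m i ∧ Even j ∧ q = (i+1,j-1)) ∨
    (Smem m (i-1) ∧ Odd j ∧ q = (i-1,j-1)) ∨
    (¬ Smem m (i-1) ∧ Odd j ∧ q = (i-1,j+1)) := by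
  obtain ⟨a, b⟩ := q
  rw [adj_iff] at h
  obtain ⟨hne, h | h⟩ := h <;> unfold Krel at h <;>
    simp only [Prod.mk.injEq, Prod.fst, Prod.snd] at h ⊢
  · rcases h with ⟨h1, h2⟩ | ⟨h1, h2⟩ | ⟨h1, h2, h3, h4⟩ | ⟨h1, h2, h3, h4⟩
    · rw [abs_eq (by norm_num : (0:ℤ) ≤ 1)] at h1
      rcases h1 with h1 | h1 <;> omega
    · rw [abs_eq (by norm_num : (0:ℤ) ≤ 1)] at h2
      rcases h2 with h2 | h2 <;> omega
    · subst h3; subst h4; tauto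
    · subst h3; subst h4; tauto
  · rcases h with ⟨h1, h2⟩ | ⟨h1, h2⟩ | ⟨h1, h2, h3, h4⟩ | ⟨h1, h2, h3, h4⟩
    · rw [abs_eq (by norm_num : (0:ℤ) ≤ 1)] at h1
      rcases h1 with h1 | h1 <;> omega
    · rw [abs_eq (by norm_num : (0:ℤ) ≤ 1)] at h2
      rcases h2 with h2 | h2 <;> omega
    · 
      have ha : a = i - 1 := by omega
      have hb : b = j - 1 := by omega
      refine Or.inr (Or.inr (Or.inr (Or.inr (Or.inr (Or.inr (Or.inl ⟨ha ▸ h1, ?_, by omega, by omega⟩))))))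
      rw [Int.odd_iff]; rw [hb, Int.even_iff] at h2; omega
    · 
      have ha : a = i - 1 := by omega
      have hb : b = j + 1 := by omega
      refine Or.inr (Or.inr (Or.inr (Or.inr (Or.inr (Or.inr (Or.inr ⟨ha ▸ h1, ?_, by omega, by omega⟩))))))
      rw [Int.odd_iff]; rw [hb, Int.even_iff] at h2; omega

lemma noTri {m i j : ℤ}
    (hc : (Even j ∧ ¬Smem m i ∧ ¬Smem m (i-1)) ∨ (Odd j ∧ Smem m i ∧ Smem m (i-1)))
    (z : ℤ × ℤ) (h1 : (Kgraph m).Adj (i,j) z) (h2 : (Kgraph m).Adj (i,j+1) z) : False := by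
  obtain ⟨a,b⟩ := z
  rcases hc with ⟨he, hs1, hs2⟩ | ⟨he, hs1, hs2⟩ <;>
  rcases adj_cases h1 with h|h|h|h|⟨u1,u2,u3⟩|⟨u1,u2,u3⟩|⟨u1,u2,u3⟩|⟨u1,u2,u3⟩ <;>
  rcases adj_cases h2 with g|g|g|g|⟨v1,v2,v3⟩|⟨v1,v2,v3⟩|⟨v1,v2,v3⟩|⟨v1,v2,v3⟩ <;>
  simp only [Prod.mk.injEq, Int.even_iff, Int.odd_iff] at * <;>
  first | omega | tauto

lemma adjDU' {m i j a b : ℤ} (h : Smem m i) (he : Even j) (ha : a = i+1) (hb : b = j+1) :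
    (Kgraph m).Adj (i,j) (a,b) := by subst ha; subst hb; exact adjDU h he

lemma adjDD' {m i j a b : ℤ} (h : ¬ Smem m i) (he : Even j) (ha : a = i+1) (hb : b = j-1) :
    (Kgraph m).Adj (i,j) (a,b) := by subst ha; subst hb; exact adjDD h he

lemma par1 {j : ℤ} (h : Odd j) : Even (j+1) := by
  rw [Int.even_iff]; rw [Int.odd_iff] at h; omega
lemma par2 {j : ℤ} (h : Odd j) : Even (j-1) := by
  rw [Int.even_iff]; rw [Int.odd_iff] at h; omega

/-- every edge at `v` lies in a triangle -/
def NT {V : Type*} (G : SimpleGraph V) (v : V) : Prop :=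
  ∀ w, G.Adj v w → ∃ z, G.Adj v z ∧ G.Adj w z

lemma nt_of_dvd {m i j : ℤ} (hm : 2 ≤ m) (hd : m ∣ i) : NT (Kgraph m) (i,j) := by
  have hsp := smem_dvd hm hd
  intro w hw
  rcases adj_cases hw with h|h|h|h|⟨u1,u2,u3⟩|⟨u1,u2,u3⟩|⟨u1,u2,u3⟩|⟨u1,u2,u3⟩
  -- w = (i+1, j)
  · subst h
    rcases Int.even_or_odd j with he | he <;> by_cases hb : Smem m i
    · exact ⟨(i+1,j+1), adjDU hb he, adjU m (i+1) j⟩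
    · exact ⟨(i+1,j-1), adjDD hb he, adjV' (Or.inr rfl)⟩
    · exact ⟨(i,j-1), adjV' (Or.inr rfl), (adjDU' hb (par2 he) rfl (by omega)).symm⟩
    · exact ⟨(i,j+1), adjU m i j, (adjDD' (i := i) (j := j+1) hb (par1 he) rfl (by omega)).symm⟩
  -- w = (i-1, j)
  · subst h
    rcases Int.even_or_odd j with he | he <;> by_cases hb : Smem m (i-1)
    · exact ⟨(i,j+1), adjU m i j, adjDU' hb he (by omega) rfl⟩
    · exact ⟨(i,j-1), adjV' (Or.inr rfl), adjDD' hb he (by omega) rfl⟩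
    · exact ⟨(i-1,j-1), (adjDU' hb (par2 he) (by omega) (by omega)).symm, adjV' (Or.inr rfl)⟩
    · exact ⟨(i-1,j+1), (adjDD' (j := j+1) hb (par1 he) (by omega) (by omega)).symm,
        adjV' (Or.inl rfl)⟩
  -- w = (i, j+1)
  · subst h
    rcases Int.even_or_odd j with he | he <;> by_cases hb : Smem m i
    · exact ⟨(i+1,j+1), adjDU hb he, adjH' (Or.inl rfl)⟩
    · have hb2 : Smem m (i-1) := hsp.mpr hb
      exact ⟨(i-1,j), adjH' (Or.inr rfl), (adjDU' hb2 he (by omega) rfl).symm⟩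
    · have hb2 : ¬ Smem m (i-1) := fun h2 => (hsp.mp h2) hb
      exact ⟨(i-1,j+1), (adjDD' (j := j+1) hb2 (par1 he) (by omega) (by omega)).symm,
        adjH' (Or.inr rfl)⟩
    · exact ⟨(i+1,j), adjH' (Or.inl rfl), adjDD' (i := i) (j := j+1) hb (par1 he) rfl (by omega)⟩
  -- w = (i, j-1)
  · subst h
    rcases Int.even_or_odd j with he | he <;> by_cases hb : Smem m i
    · have hb2 : ¬ Smem m (i-1) := fun h2 => (hsp.mp h2) hb
      exact ⟨(i-1,j), adjH' (Or.inr rfl), (adjDD' hb2 he (by omega) (by omega)).symm⟩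
    · exact ⟨(i+1,j-1), adjDD hb he, adjH' (Or.inl rfl)⟩
    · exact ⟨(i+1,j), adjH' (Or.inl rfl), adjDU' (i := i) (j := j-1) hb (par2 he) rfl (by omega)⟩
    · have hb2 : Smem m (i-1) := hsp.mpr hb
      exact ⟨(i-1,j-1), (adjDU' (i := i-1) (j := j-1) hb2 (par2 he) (by omega) (by omega)).symm,
        adjH' (Or.inr rfl)⟩
  -- w = (i+1, j+1)
  · subst u3; exact ⟨(i+1,j), adjH' (Or.inl rfl), adjV' (Or.inr (by omega))⟩
  -- w = (i+1, j-1)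
  · subst u3; exact ⟨(i+1,j), adjH' (Or.inl rfl), adjV' (Or.inl (by omega))⟩
  -- w = (i-1, j-1)
  · subst u3; exact ⟨(i-1,j), adjH' (Or.inr rfl), adjV' (Or.inl (by omega))⟩
  -- w = (i-1, j+1)
  · subst u3; exact ⟨(i-1,j), adjH' (Or.inr rfl), adjV' (Or.inr (by omega))⟩

lemma par3 {j : ℤ} (h : Even j) : Odd (j-1) := by
  rw [Int.odd_iff]; rw [Int.even_iff] at h; omega

lemma not_nt {m i j : ℤ} (hm : 2 ≤ m) (hd : ¬ m ∣ i) : ¬ NT (Kgraph m) (i,j) := by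
  have hsp := smem_not_dvd hm hd
  intro hnt
  by_cases hb : Smem m i <;> rcases Int.even_or_odd j with he | he
  · -- Smem, Even j : bad edge (i,j-1)-(i,j)
    obtain ⟨z, hz1, hz2⟩ := hnt (i,j-1) (adjV' (Or.inr rfl))
    have hz1' : (Kgraph m).Adj (i, j-1+1) z := by rw [show j-1+1 = j by ring]; exact hz1
    exact noTri (Or.inr ⟨par3 he, hb, hsp.mpr hb⟩) z hz2 hz1'
  · -- Smem, Odd j : bad edge (i,j)-(i,j+1)
    obtain ⟨z, hz1, hz2⟩ := hnt (i,j+1) (adjU m i j)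
    exact noTri (Or.inr ⟨he, hb, hsp.mpr hb⟩) z hz1 hz2
  · -- ¬Smem, Even j : bad edge (i,j)-(i,j+1)
    obtain ⟨z, hz1, hz2⟩ := hnt (i,j+1) (adjU m i j)
    exact noTri (Or.inl ⟨he, hb, fun h => hb (hsp.mp h)⟩) z hz1 hz2
  · -- ¬Smem, Odd j : bad edge (i,j-1)-(i,j)
    obtain ⟨z, hz1, hz2⟩ := hnt (i,j-1) (adjV' (Or.inr rfl))
    have hz1' : (Kgraph m).Adj (i, j-1+1) z := by rw [show j-1+1 = j by ring]; exact hz1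
    exact noTri (Or.inl ⟨par2 he, hb, fun h => hb (hsp.mp h)⟩) z hz2 hz1'

lemma nt_iff_dvd {m : ℤ} (hm : 2 ≤ m) (v : ℤ × ℤ) : NT (Kgraph m) v ↔ m ∣ v.1 := by
  obtain ⟨i, j⟩ := v
  constructor
  · intro h
    by_contra hd
    exact not_nt hm hd h
  · exact fun h => nt_of_dvd hm h

lemma adj_col {m : ℤ} {p q : ℤ × ℤ} (h : (Kgraph m).Adj p q) : |p.1 - q.1| ≤ 1 := by
  obtain ⟨i, j⟩ := p
  rcases adj_cases h with h|h|h|h|⟨_,_,h⟩|⟨_,_,h⟩|⟨_,_,h⟩|⟨_,_,h⟩ <;> subst h <;>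
    simp <;> rw [abs_le] <;> omega

lemma walk_col {m : ℤ} {u v : ℤ × ℤ} (p : (Kgraph m).Walk u v) :
    |u.1 - v.1| ≤ (p.length : ℤ) := by
  induction p with
  | nil => simp
  | @cons a b c h q ih =>
    calc |a.1 - c.1| ≤ |a.1 - b.1| + |b.1 - c.1| := abs_sub_le _ _ _
    _ ≤ 1 + q.length := add_le_add (adj_col h) ih
    _ = ((SimpleGraph.Walk.cons h q).length : ℤ) := by
      rw [SimpleGraph.Walk.length_cons]; push_cast; ring

open SimpleGraph in
lemma ntwalk_col {m : ℤ} (hm : 2 ≤ m) {u v : ℤ × ℤ} (p : (Kgraph m).Walk u v)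
    (hall : ∀ x ∈ p.support, NT (Kgraph m) x) : u.1 = v.1 := by
  induction p with
  | nil => rfl
  | @cons a b c h q ih =>
    have ha : NT (Kgraph m) a := hall a (Walk.start_mem_support _)
    have hb : NT (Kgraph m) b := hall b (by simp [Walk.support_cons])
    have d1 : m ∣ a.1 := (nt_iff_dvd hm a).mp ha
    have d2 : m ∣ b.1 := (nt_iff_dvd hm b).mp hb
    have habs : |a.1 - b.1| ≤ 1 := adj_col h
    have h0 : a.1 - b.1 = 0 :=
      Int.eq_zero_of_abs_lt_dvd (dvd_sub d1 d2) (by omega)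
    have hbc : b.1 = c.1 := ih (fun x hx => hall x (by simp [Walk.support_cons]; tauto))
    omega

open SimpleGraph in
lemma col_walk {m i : ℤ} (hm : 2 ≤ m) (hd : m ∣ i) (b : ℤ) : ∀ (n : ℕ) (a : ℤ),
    (b - a).natAbs = n →
    ∃ p : (Kgraph m).Walk (i,a) (i,b), ∀ x ∈ p.support, NT (Kgraph m) x := by
  intro n
  induction n with
  | zero =>
    intro a hn
    have : a = b := by omega
    subst this
    refine ⟨Walk.nil, ?_⟩
    intro x hx
    simp [Walk.support_nil] at hx
    subst hx
    exact nt_of_dvd hm hd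
  | succ n ih =>
    intro a hn
    rcases lt_or_ge a b with hab | hab
    · obtain ⟨p, hp⟩ := ih (a+1) (by omega)
      refine ⟨Walk.cons (adjU m i a) p, ?_⟩
      intro x hx
      simp only [Walk.support_cons, List.mem_cons] at hx
      rcases hx with rfl | hx
      · exact nt_of_dvd hm hd
      · exact hp x hx
    · obtain ⟨p, hp⟩ := ih (a-1) (by omega)
      refine ⟨Walk.cons (adjV' (Or.inr rfl)) p, ?_⟩
      intro x hx
      simp only [Walk.support_cons, List.mem_cons] at hx
      rcases hx with rfl | hx
      · exact nt_of_dvd hm hd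
      · exact hp x hx

open SimpleGraph in
lemma hor_walk (m : ℤ) : ∀ n : ℕ, ∃ p : (Kgraph m).Walk ((0:ℤ),(0:ℤ)) ((n:ℤ),0), p.length = n := by
  intro n
  induction n with
  | zero => exact ⟨Walk.nil.copy rfl (by norm_num), by simp⟩
  | succ n ih =>
    obtain ⟨p, hp⟩ := ih
    refine ⟨(p.append (Walk.cons (adjR m n 0) Walk.nil)).copy rfl (by push_cast; ring_nf), ?_⟩
    simp [Walk.length_copy, Walk.length_append, hp]

open SimpleGraph in
lemma nt_map {V W : Type*} {G : SimpleGraph V} {H : SimpleGraph W} (φ : G ≃g H) (v : V)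
    (h : NT G v) : NT H (φ v) := by
  intro w hw
  have hw' : H.Adj (φ v) (φ (φ.symm w)) := by simpa using hw
  obtain ⟨z, h1, h2⟩ := h (φ.symm w) (φ.map_adj_iff.mp hw')
  refine ⟨φ z, φ.map_adj_iff.mpr h1, ?_⟩
  have := φ.map_adj_iff.mpr h2
  simpa using this

open SimpleGraph in
lemma ntconn_map {V W : Type*} {G : SimpleGraph V} {H : SimpleGraph W} (φ : G ≃g H) {u v : V}
    (h : ∃ p : G.Walk u v, ∀ x ∈ p.support, NT G x) :
    ∃ p : H.Walk (φ u) (φ v), ∀ x ∈ p.support, NT H x := by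
  obtain ⟨p, hp⟩ := h
  refine ⟨p.map φ.toHom, ?_⟩
  intro x hx
  rw [Walk.support_map] at hx
  obtain ⟨y, hy, rfl⟩ := List.mem_map.mp hx
  exact nt_map φ y (hp y hy)

open SimpleGraph in
lemma key {x y : ℤ} (hx : 2 ≤ x) (hy : 2 ≤ y) (φ : Kgraph x ≃g Kgraph y) : y ≤ x := by
  set u : ℤ × ℤ := ((0:ℤ), (0:ℤ)) with hu_def
  set v : ℤ × ℤ := (x, (0:ℤ)) with hv_def
  have hu : NT (Kgraph x) u := nt_of_dvd hx (dvd_zero x)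
  have hv : NT (Kgraph x) v := nt_of_dvd hx dvd_rfl
  obtain ⟨p0, hp0⟩ := hor_walk x x.toNat
  have hc : ((x.toNat : ℤ)) = x := Int.toNat_of_nonneg (by omega)
  let p : (Kgraph x).Walk u v := p0.copy rfl (by rw [hv_def, hc])
  have hplen : p.length = x.toNat := by
    simp only [p, Walk.length_copy]; exact hp0
  have hu' : NT (Kgraph y) (φ u) := nt_map φ u hu
  have hv' : NT (Kgraph y) (φ v) := nt_map φ v hv
  have d1 : y ∣ (φ u).1 := (nt_iff_dvd hy _).mp hu'
  have d2 : y ∣ (φ v).1 := (nt_iff_dvd hy _).mp hv'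
  have hne : (φ u).1 ≠ (φ v).1 := by
    intro heq
    obtain ⟨pw, hpw⟩ := col_walk hy d1 ((φ v).2) (((φ v).2 - (φ u).2).natAbs) ((φ u).2) rfl
    let pw' : (Kgraph y).Walk (φ u) (φ v) := pw.copy (by rw [Prod.mk.eta]) (by rw [heq, Prod.mk.eta])
    have hpw' : ∀ z ∈ pw'.support, NT (Kgraph y) z := by
      intro z hz
      apply hpw
      simpa [pw', Walk.support_copy] using hz
    obtain ⟨pw2, hpw2⟩ := ntconn_map φ.symm ⟨pw', hpw'⟩
    have hcol := ntwalk_col hx pw2 hpw2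
    rw [φ.symm_apply_apply, φ.symm_apply_apply] at hcol
    simp [hu_def, hv_def] at hcol
    omega
  have hdvd : y ∣ ((φ u).1 - (φ v).1) := dvd_sub d1 d2
  have hpos : 0 < |(φ u).1 - (φ v).1| := by
    rw [abs_pos]; omega
  have hle : y ≤ |(φ u).1 - (φ v).1| := Int.le_of_dvd hpos ((dvd_abs _ _).mpr hdvd)
  have hbound : |(φ u).1 - (φ v).1| ≤ ((p.map φ.toHom).length : ℤ) := by
    have := walk_col (p.map φ.toHom)
    simpa using this
  rw [Walk.length_map, hplen] at hbound
  omega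

theorem stmt_9 :
    (∀ x y : ℤ, 2 ≤ x → 2 ≤ y → x ≠ y → IsEmpty (Kgraph x ≃g Kgraph y)) ∧
    {G : SimpleGraph (ℤ × ℤ) | ∃ m : ℤ, 2 ≤ m ∧ G = Kgraph m}.Infinite := by
  have part1 : ∀ x y : ℤ, 2 ≤ x → 2 ≤ y → x ≠ y → IsEmpty (Kgraph x ≃g Kgraph y) := by
    intro x y hx hy hne
    constructor
    intro φ
    have h1 : y ≤ x := key hx hy φ
    have h2 : x ≤ y := key hy hx φ.symm
    omega
  refine ⟨part1, ?_⟩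
  have himg : {G : SimpleGraph (ℤ × ℤ) | ∃ m : ℤ, 2 ≤ m ∧ G = Kgraph m}
      = Kgraph '' (Set.Ici 2) := by
    ext G
    simp only [Set.mem_setOf_eq, Set.mem_image, Set.mem_Ici]
    constructor
    · rintro ⟨m, hm, rfl⟩; exact ⟨m, hm, rfl⟩
    · rintro ⟨m, hm, rfl⟩; exact ⟨m, hm, rfl⟩
  rw [himg]
  refine Set.Infinite.image ?_ (Set.Ici_infinite 2)
  intro a ha b hb hab
  by_contra hne
  exact (part1 a b ha hb hne).false (hab ▸ SimpleGraph.Iso.refl)
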